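/- Let (t_i)_{i∈ℕ} be a sequence of real numbers that is algebraically independent over ℚ, and let A ⊆ ℝ² be the set of all points P_{a,b} = (t_a + t_b, t_a² + t_a t_b + t_b²) over unordered pairs {a,b} of distinct naturals. Then for every m ≥ 1 and every partition (or covering) of A into m sets A₁, …, A_m, some A_i contains three distinct collinear points. -/

import Mathlib

/-!
The three points `P(x,y)`, `P(x,z)`, `P(y,z)` always lie on the line of slope `x + y + z`, since
`P(x,z) - P(x,y) = (z - y) • (1, x + y + z)` and `P(y,z) - P(x,y) = (z - x) • (1, x + y + z)`.
So it suffices to find distinct `a, b, d` with `P(t a, t b)`, `P(t a, t d)`, `P(t b, t d)` in one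
part, which is Ramsey's theorem for monochromatic triangles in a finite colouring of the pairs
of naturals. Injectivity of `t` keeps the three points distinct.
-/

/-- The point `P(a,b) = (a + b, a² + ab + b²)` in the plane. -/
noncomputable def Ppt (a b : ℝ) : ℝ × ℝ := (a + b, a ^ 2 + a * b + b ^ 2)

theorem Ppt_comm (x y : ℝ) : Ppt x y = Ppt y x := by
  simp only [Ppt, Prod.ext_iff]
  constructor <;> ring

theorem Ppt_right_injective (x : ℝ) : Function.Injective (Ppt x) := fun y z h => by
  simpa [Ppt] using congrArg Prod.fst h

theorem collinear_Ppt (x y z : ℝ) :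
    Collinear ℝ ({Ppt x y, Ppt x z, Ppt y z} : Set (ℝ × ℝ)) := by
  rw [collinear_iff_of_mem (Set.mem_insert _ _)]
  refine ⟨(1, x + y + z), ?_⟩
  rintro p (rfl | rfl | rfl)
  · exact ⟨0, by simp⟩
  · refine ⟨z - y, ?_⟩
    simp only [Ppt, Prod.smul_mk, smul_eq_mul, vadd_eq_add, Prod.mk_add_mk, Prod.mk.injEq]
    constructor <;> ring
  · refine ⟨z - x, ?_⟩
    simp only [Ppt, Prod.smul_mk, smul_eq_mul, vadd_eq_add, Prod.mk_add_mk, Prod.mk.injEq]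
    constructor <;> ring

theorem Set.Infinite.exists_infinite_fiber_of_mapsTo {α β : Type*} {s : Set α} {F : Set β}
    {g : α → β} (hs : s.Infinite) (hF : F.Finite) (hg : Set.MapsTo g s F) :
    ∃ j ∈ F, {x ∈ s | g x = j}.Infinite := by
  by_contra! h
  refine hs ((hF.biUnion fun j hj => h j hj).subset fun x hx => ?_)
  exact Set.mem_biUnion (hg hx) ⟨hx, rfl⟩

theorem exists_monochromatic_triangle {α κ : Type*} (c : α → α → κ) (F : Finset κ)
    {S : Set α} (hS : S.Infinite) (hF : ∀ a ∈ S, ∀ b ∈ S, a ≠ b → c a b ∈ F) :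
    ∃ a ∈ S, ∃ b ∈ S, ∃ d ∈ S, a ≠ b ∧ a ≠ d ∧ b ≠ d ∧ c a b = c a d ∧ c a b = c b d := by
  classical
  induction F using Finset.strongInduction generalizing S with
  | _ F ih =>
  obtain ⟨v, hv⟩ := hS.nonempty
  obtain ⟨j, hjF, hT⟩ : ∃ j ∈ (F : Set κ), {x ∈ S \ {v} | c v x = j}.Infinite :=
    (hS.sdiff (Set.finite_singleton v)).exists_infinite_fiber_of_mapsTo F.finite_toSet
      fun x hx => hF v hv x hx.1 (Ne.symm hx.2)
  by_cases hjT : ∃ a ∈ S \ {v}, ∃ b ∈ S \ {v}, a ≠ b ∧ c v a = j ∧ c v b = j ∧ c a b = j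
  · obtain ⟨a, ha, b, hb, hab, hva, hvb, hcab⟩ := hjT
    exact ⟨v, hv, a, ha.1, b, hb.1, Ne.symm ha.2, Ne.symm hb.2, hab, hva.trans hvb.symm,
      hva.trans hcab.symm⟩
  · -- Otherwise the `j`-neighbourhood of `v` avoids the colour `j`, and we recurse into it.
    obtain ⟨a, ha, b, hb, d, hd, h⟩ := ih (F.erase j) (Finset.erase_ssubset hjF) hT
      fun a ha b hb hab => Finset.mem_erase.2
        ⟨fun h => hjT ⟨a, ha.1, b, hb.1, hab, ha.2, hb.2, h⟩, hF a ha.1.1 b hb.1.1 hab⟩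
    exact ⟨a, ha.1.1, b, hb.1.1, d, hd.1.1, h⟩

theorem stmt_10_general (t : ℕ → ℝ) (ht : AlgebraicIndependent ℚ t)
    (A : Set (ℝ × ℝ))
    (hA : A = {p : ℝ × ℝ | ∃ a b : ℕ, a ≠ b ∧ p = Ppt (t a) (t b)})
    (m : ℕ) (f : Fin m → Set (ℝ × ℝ))
    (hcov : A ⊆ ⋃ i, f i) :
    ∃ i : Fin m, ∃ p ∈ f i, ∃ q ∈ f i, ∃ r ∈ f i,
      p ≠ q ∧ p ≠ r ∧ q ≠ r ∧ Collinear ℝ ({p, q, r} : Set (ℝ × ℝ)) := by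
  have ht_inj : Function.Injective t := ht.injective
  have hpart : ∀ a b : ℕ, a ≠ b → ∃ i, Ppt (t a) (t b) ∈ f i := fun a b hab =>
    Set.mem_iUnion.1 (hcov (hA ▸ ⟨a, b, hab, rfl⟩))
  have : Nonempty (Fin m) := ⟨(hpart 0 1 zero_ne_one).choose⟩
  let c a b := Classical.epsilon fun i => Ppt (t a) (t b) ∈ f i
  have hc : ∀ a b, a ≠ b → Ppt (t a) (t b) ∈ f (c a b) := fun a b hab =>
    Classical.epsilon_spec (hpart a b hab)
  obtain ⟨a, -, b, -, d, -, hab, had, hbd, hcd, hcd'⟩ :=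
    exists_monochromatic_triangle c Finset.univ Set.infinite_univ fun _ _ _ _ _ => Finset.mem_univ _
  refine ⟨c a b, _, hc a b hab, _, hcd ▸ hc a d had, _, hcd' ▸ hc b d hbd,
    (Ppt_right_injective _).ne (ht_inj.ne hbd), ?_, ?_, collinear_Ppt _ _ _⟩
  · rw [Ppt_comm (t a)]
    exact (Ppt_right_injective _).ne (ht_inj.ne had)
  · rw [Ppt_comm (t a), Ppt_comm (t b)]
    exact (Ppt_right_injective _).ne (ht_inj.ne hab)

theorem stmt_10 (t : ℕ → ℝ) (ht : AlgebraicIndependent ℚ t)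
    (A : Set (ℝ × ℝ))
    (hA : A = {p : ℝ × ℝ | ∃ a b : ℕ, a ≠ b ∧ p = Ppt (t a) (t b)})
    (m : ℕ) (hm : 1 ≤ m) (f : Fin m → Set (ℝ × ℝ))
    (hsub : ∀ i, f i ⊆ A) (hcov : A ⊆ ⋃ i, f i) :
    ∃ i : Fin m, ∃ p ∈ f i, ∃ q ∈ f i, ∃ r ∈ f i,
      p ≠ q ∧ p ≠ r ∧ q ≠ r ∧ Collinear ℝ ({p, q, r} : Set (ℝ × ℝ)) :=
  stmt_10_general t ht A hA m f hcov
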